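/- arXiv:1307.6818 — 4 statements merged into one kernel-verified Lean document; each statement's English description precedes it below -/
import Mathlib

section
/- For every α ∈ (1,2), p_α(x) converges as x → 0⁺ to 1/|Γ(−1/α)|; equivalently, lim_{x→0⁺} p_α(x) = Γ(1+1/α)·sin(π/α)/π = 1/(α·Γ(1−1/α)). -/
open Real Filter Set

/-- Feller's series representation of the density of the spectrally positive
`α`-stable law (evaluated at `-x`): for `x > 0`,
`p α x = -(1/(π x)) · Σ_{k ≥ 1} (Γ(1 + k/α)/k!) · (-x)^k · sin(kπ/α)`. -/
noncomputable def stableDensity (α : ℝ) (x : ℝ) : ℝ :=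
  -(1 / (π * x)) * ∑' k : ℕ,
    Real.Gamma (1 + (k + 1 : ℝ) / α) / (Nat.factorial (k + 1) : ℝ)
      * (-x) ^ (k + 1) * Real.sin ((k + 1 : ℝ) * π / α)

/-!
For `x ≠ 0` the defining series is `Σ aₖ xᵏ` with
`aₖ = (-1)ᵏ Γ(1 + (k+1)/α) sin((k+1)π/α) / (π (k+1)!)`. Convexity of `Γ` gives
`Γ(1 + (k+1)/α) ≤ (k+1)!` when `α ≥ 1`, so `|aₖ| ≤ 1/π`; a power series with bounded
coefficients is continuous at `0`, hence `p_α(x) → a₀ = Γ(1 + 1/α) sin(π/α) / π`.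
The closed forms of `a₀` come from `Γ(s + 1) = s Γ(s)` and the reflection formula at `s = 1/α`.
-/

open Topology

namespace Real

theorem Gamma_one_add_le_factorial {y : ℝ} {n : ℕ} (hy₀ : 0 ≤ y) (hyn : y ≤ n) :
    Gamma (1 + y) ≤ n.factorial := by
  have h := convexOn_Gamma.le_max_of_mem_Icc (x := 1) (y := (n : ℝ) + 1) (z := 1 + y)
    (mem_Ioi.mpr one_pos) (mem_Ioi.mpr (by positivity)) ⟨by linarith, by linarith⟩
  rwa [Gamma_one, Gamma_nat_eq_factorial, max_eq_right (by exact_mod_cast n.factorial_pos)] at h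

theorem Gamma_neg_eq_neg_Gamma_one_sub_div {s : ℝ} (hs : s ≠ 0) :
    Gamma (-s) = -Gamma (1 - s) / s := by
  have h := Gamma_add_one (neg_ne_zero.mpr hs)
  rw [neg_add_eq_sub] at h
  field_simp
  linarith

theorem Gamma_one_add_mul_sin_div_pi {s : ℝ} (hs : ∀ n : ℤ, s ≠ n) :
    Gamma (1 + s) * sin (π * s) / π = s / Gamma (1 - s) := by
  have hs₀ : s ≠ 0 := by simpa using hs 0
  have hsin : sin (π * s) ≠ 0 := by
    rintro h
    obtain ⟨n, hn⟩ := sin_eq_zero_iff.mp h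
    exact hs n (mul_left_cancel₀ pi_ne_zero (hn.symm.trans (mul_comm _ _)))
  have hΓ : Gamma (1 - s) ≠ 0 := Gamma_ne_zero fun m hm => hs (1 + m) (by push_cast; linarith)
  rw [add_comm, Gamma_add_one hs₀, eq_div_iff hΓ]
  calc s * Gamma s * sin (π * s) / π * Gamma (1 - s)
      = s * (Gamma s * Gamma (1 - s) * sin (π * s)) / π := by ring
    _ = s := by
      rw [Gamma_mul_Gamma_one_sub, div_mul_cancel₀ _ hsin, mul_div_cancel_right₀ _ pi_ne_zero]

end Real

theorem continuousAt_tsum_mul_pow_zero {𝕜 : Type*} [NormedField 𝕜] [CompleteSpace 𝕜]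
    {a : ℕ → 𝕜} {C : ℝ} (ha : ∀ k, ‖a k‖ ≤ C) :
    ContinuousAt (fun x => ∑' k, a k * x ^ k) 0 := by
  have hcont : ContinuousOn (fun x => ∑' k, a k * x ^ k) (Metric.closedBall 0 (1 / 2)) := by
    refine continuousOn_tsum (fun k => by fun_prop) (summable_geometric_two.mul_left C)
      fun k x hx => ?_
    rw [mem_closedBall_zero_iff] at hx
    rw [norm_mul, norm_pow]
    exact mul_le_mul (ha k) (pow_le_pow_left₀ (norm_nonneg x) hx k) (by positivity)
      ((norm_nonneg _).trans (ha k))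
  exact hcont.continuousAt (Metric.closedBall_mem_nhds 0 (by norm_num))

theorem tsum_mul_zero_pow {𝕜 : Type*} [NormedField 𝕜] (a : ℕ → 𝕜) :
    ∑' k, a k * 0 ^ k = a 0 := by
  rw [tsum_eq_single 0 fun k hk => by simp [hk]]
  simp

noncomputable def stableCoeff (α : ℝ) (k : ℕ) : ℝ :=
  (-1) ^ k * Gamma (1 + (k + 1 : ℝ) / α) / (k + 1).factorial * sin ((k + 1 : ℝ) * π / α) / π

theorem stableCoeff_zero (α : ℝ) :
    stableCoeff α 0 = Gamma (1 + 1 / α) * sin (π / α) / π := by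
  simp [stableCoeff]

theorem abs_stableCoeff_le {α : ℝ} (hα : 1 ≤ α) (k : ℕ) :
    |stableCoeff α k| ≤ 1 / π := by
  have hα₀ : 0 < α := by linarith
  have hΓ : Gamma (1 + (k + 1 : ℝ) / α) ≤ (k + 1).factorial := by
    refine Gamma_one_add_le_factorial (by positivity) ?_
    rw [div_le_iff₀ hα₀]
    push_cast
    exact le_mul_of_one_le_right (by positivity) hα
  have hΓ₀ : 0 < Gamma (1 + (k + 1 : ℝ) / α) := Gamma_pos_of_pos (by positivity)
  have hfac : (0 : ℝ) < (k + 1).factorial := by positivity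
  rw [stableCoeff, abs_div, abs_of_pos pi_pos]
  gcongr
  rw [abs_mul, abs_div, abs_mul, abs_pow, abs_neg, abs_one, one_pow, one_mul, abs_of_pos hΓ₀,
    abs_of_pos hfac]
  exact mul_le_one₀ ((div_le_one hfac).mpr hΓ) (abs_nonneg _) (abs_sin_le_one _)

theorem stableDensity_eq_tsum (α : ℝ) {x : ℝ} (hx : x ≠ 0) :
    stableDensity α x = ∑' k, stableCoeff α k * x ^ k := by
  rw [stableDensity, ← tsum_mul_left]
  congr 1
  ext k
  rw [stableCoeff, neg_pow, pow_succ]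
  field_simp
  ring

theorem tendsto_stableDensity_nhdsGT_zero {α : ℝ} (hα : 1 ≤ α) :
    Tendsto (stableDensity α) (𝓝[>] 0) (𝓝 (stableCoeff α 0)) := by
  have hcont := continuousAt_tsum_mul_pow_zero (a := stableCoeff α) (abs_stableCoeff_le hα)
  rw [ContinuousAt, tsum_mul_zero_pow] at hcont
  exact (hcont.mono_left nhdsWithin_le_nhds).congr'
    (eventually_nhdsWithin_of_forall fun x hx => (stableDensity_eq_tsum α (ne_of_gt hx)).symm)

/-- As `x → 0⁺`, `p_α(x)` converges to `1/|Γ(-1/α)|`, which moreover equals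
`Γ(1 + 1/α)·sin(π/α)/π = 1/(α·Γ(1 - 1/α))`. -/
theorem stableDensity_tendsto_zero (α : ℝ) (hα : α ∈ Set.Ioo (1 : ℝ) 2) :
    Tendsto (stableDensity α) (nhdsWithin 0 (Set.Ioi 0))
      (nhds (1 / |Real.Gamma (-1 / α)|))
    ∧ 1 / |Real.Gamma (-1 / α)| = Real.Gamma (1 + 1 / α) * Real.sin (π / α) / π
    ∧ Real.Gamma (1 + 1 / α) * Real.sin (π / α) / π
        = 1 / (α * Real.Gamma (1 - 1 / α)) := by
  obtain ⟨hα₁, -⟩ := hα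
  have hα₀ : 0 < α := by linarith
  have hinv : 1 / α < 1 := (div_lt_one hα₀).mpr hα₁
  have hΓ : 0 < Gamma (1 - 1 / α) := Gamma_pos_of_pos (by linarith)
  have hreflect : Gamma (1 + 1 / α) * sin (π / α) / π = 1 / (α * Gamma (1 - 1 / α)) := by
    have hs : ∀ n : ℤ, 1 / α ≠ n := by
      rintro n hn
      have h₀ : (0 : ℝ) < n := hn ▸ by positivity
      have h₁ : (n : ℝ) < 1 := hn ▸ hinv
      norm_cast at h₀ h₁
      omega
    rw [← mul_one_div π α, Gamma_one_add_mul_sin_div_pi hs]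
    field_simp
  have habs : 1 / |Gamma (-1 / α)| = 1 / (α * Gamma (1 - 1 / α)) := by
    rw [neg_div, Gamma_neg_eq_neg_Gamma_one_sub_div (by positivity), abs_div, abs_neg,
      abs_of_pos hΓ, abs_of_pos (by positivity)]
    field_simp
  refine ⟨?_, habs.trans hreflect.symm, hreflect⟩
  rw [habs, ← hreflect, ← stableCoeff_zero]
  exact tendsto_stableDensity_nhdsGT_zero hα₁.le
end

section
/- For every α ∈ (0,1): ν_α is a probability distribution on ℕ (its values are nonnegative and sum to 1); for every z ∈ [0,1], Σ_{k≥0} ν_α(k)·z^k = F_α(z) = (2α − 1 + √3·z + (1−z)^{3/2})/(2α − 1 + √3); and its mean satisfies Σ_{k≥0} k·ν_α(k) = (1 + 2(α − 1/2)/√3)^{−1}. In particular, ν_α has mean 1 (is critical) if and only if α = 1/2. -/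
/-!
With `D = 2α - 1 + √3`, `D · ν_α(k)` is the `k`-th Taylor coefficient at `0` of
`2α - 1 + √3 z + (1 - z)^{3/2}`: the polynomial part contributes at `k = 0, 1`, and the binomial
series contributes `(-1)^k binom(3/2, k)`, which is `≥ 0` for `k ≥ 2`.
The absorption identity `(k + 1) binom(r, k + 1) = r binom(r - 1, k)` reduces the convergence of
`∑ (-1)^k binom(r, k)` for `r > 0` to `0 < r ≤ 1`, where the terms past `k = 0` are `≤ 0` and the
partial sums telescope to `(-1)^n binom(r - 1, n) ≥ 0`; Abel's theorem then identifies the sum as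
`(1 - 1)^r = 0`, which gives the generating function at `z = 1`. The same identity turns
`∑ k (-1)^k binom(3/2, k)` into `-(3/2) ∑ (-1)^k binom(1/2, k) = 0`, so the mean is `√3 / D`.
-/

open Real Filter Set

/-- Generalized binomial coefficient `binom(r, k) = r(r-1)⋯(r-k+1)/k!`. -/
noncomputable def genBinom (r : ℝ) (k : ℕ) : ℝ :=
  (∏ i ∈ Finset.range k, (r - (i : ℝ))) / (Nat.factorial k : ℝ)

/-- The coefficients `q_k = 12^{-k} [y^k] W(r_c, y)`: explicitly
`q_1 = (1/12)(1/2 - √3/4)` and `q_k = (-1)^k binom(3/2, k)/(24√3)` for `k ≥ 2`. -/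
noncomputable def qCoeff : ℕ → ℝ := fun k =>
  if k = 1 then (1 / 12) * (1 / 2 - Real.sqrt 3 / 4)
  else (-1 : ℝ) ^ k * genBinom (3 / 2) k / (24 * Real.sqrt 3)

/-- The offspring distribution `ν_α` on `ℕ`: with `γ = √3 - 1` and `r_c = 1/(12√3)`,
`ν_α(0) = 2α/(γ + 2α)` and `ν_α(k) = 2 q_k/(r_c (γ + 2α))` for `k ≥ 1`. -/
noncomputable def nuAlpha (α : ℝ) : ℕ → ℝ := fun k =>
  if k = 0 then 2 * α / ((Real.sqrt 3 - 1) + 2 * α)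
  else 2 * qCoeff k / ((1 / (12 * Real.sqrt 3)) * ((Real.sqrt 3 - 1) + 2 * α))

open Topology

theorem genBinom_eq_choose (r : ℝ) (k : ℕ) : genBinom r k = Ring.choose r k := by
  rw [Ring.choose_eq_smul, ← Polynomial.aeval_eq_smeval, Polynomial.aeval_def,
    ← Polynomial.eval_map, descPochhammer_map, descPochhammer_eval_eq_prod_range, genBinom,
    smul_eq_mul, div_eq_inv_mul]

namespace Ring

section Field

variable {K : Type*} [Field K] [CharZero K]

theorem succ_mul_choose_succ (r : K) (k : ℕ) :
    ((k : K) + 1) * choose r (k + 1) = r * choose (r - 1) k := by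
  simpa [choose_one_right, add_mul] using choose_smul_choose r (n := k + 1) (k := 1) (by omega)

theorem neg_one_pow_succ_mul_choose_succ (r : K) (k : ℕ) :
    (-1) ^ (k + 1) * choose r (k + 1) = -(r / (k + 1)) * ((-1) ^ k * choose (r - 1) k) := by
  calc (-1) ^ (k + 1) * choose r (k + 1)
      = -((-1) ^ k / (k + 1)) * ((k + 1) * choose r (k + 1)) := by field_simp; ring
    _ = _ := by rw [succ_mul_choose_succ]; ring

theorem sum_range_succ_neg_one_pow_mul_choose (r : K) (n : ℕ) :
    ∑ k ∈ Finset.range (n + 1), (-1) ^ k * choose r k = (-1) ^ n * choose (r - 1) n := by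
  induction n with
  | zero => simp
  | succ n ih =>
    have pascal := choose_succ_succ (r - 1) n
    rw [sub_add_cancel] at pascal
    rw [Finset.sum_range_succ, ih, pascal]
    ring

end Field

theorem neg_one_pow_mul_choose_nonneg_of_nonpos {r : ℝ} (hr : r ≤ 0) (k : ℕ) :
    0 ≤ (-1) ^ k * choose r k := by
  have h : ∏ i ∈ Finset.range k, ((i : ℝ) - r) = (-1) ^ k * ∏ i ∈ Finset.range k, (r - i) := by
    simpa using Finset.prod_neg (s := Finset.range k) (fun i : ℕ => r - i)
  rw [← genBinom_eq_choose, genBinom, mul_div_assoc', ← h]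
  exact div_nonneg (Finset.prod_nonneg fun i _ => by linarith [(i.cast_nonneg : (0 : ℝ) ≤ i)])
    (by positivity)

theorem neg_one_pow_mul_choose_nonpos {r : ℝ} (h0 : 0 ≤ r) (h1 : r ≤ 1) {k : ℕ} (hk : k ≠ 0) :
    (-1) ^ k * choose r k ≤ 0 := by
  obtain ⟨k, rfl⟩ := Nat.exists_eq_succ_of_ne_zero hk
  rw [neg_one_pow_succ_mul_choose_succ, neg_mul, neg_nonpos]
  exact mul_nonneg (by positivity) (neg_one_pow_mul_choose_nonneg_of_nonpos (by linarith) k)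

theorem neg_one_pow_mul_choose_nonneg {r : ℝ} (h1 : 1 ≤ r) (h2 : r ≤ 2) {k : ℕ} (hk : 2 ≤ k) :
    0 ≤ (-1) ^ k * choose r k := by
  obtain ⟨k, rfl⟩ := Nat.exists_eq_add_of_le' hk
  rw [neg_one_pow_succ_mul_choose_succ, neg_mul, neg_nonneg]
  exact mul_nonpos_of_nonneg_of_nonpos (by positivity)
    (neg_one_pow_mul_choose_nonpos (by linarith) (by linarith) (by omega))

theorem summable_neg_one_pow_mul_choose_of_le_one {r : ℝ} (h0 : 0 ≤ r) (h1 : r ≤ 1) :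
    Summable fun k => (-1) ^ k * choose r k := by
  rw [← summable_nat_add_iff 1, ← summable_neg_iff]
  refine summable_of_sum_range_le (c := 1)
    (fun k => neg_nonneg.2 (neg_one_pow_mul_choose_nonpos h0 h1 k.succ_ne_zero)) fun n => ?_
  have hsplit := Finset.sum_range_succ' (fun k => (-1) ^ k * choose r k) n
  rw [sum_range_succ_neg_one_pow_mul_choose] at hsplit
  have := neg_one_pow_mul_choose_nonneg_of_nonpos (by linarith : r - 1 ≤ 0) n
  simp only [Finset.sum_neg_distrib, pow_zero, choose_zero_right] at hsplit ⊢
  linarith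

theorem summable_neg_one_pow_mul_choose_of_sub_one {r : ℝ}
    (h : Summable fun k => (-1) ^ k * choose (r - 1) k) :
    Summable fun k => (-1) ^ k * choose r k := by
  rw [← summable_nat_add_iff 1]
  refine Summable.of_norm_bounded (h.norm.mul_left |r|) fun k => ?_
  rw [neg_one_pow_succ_mul_choose_succ, norm_mul, norm_neg, Real.norm_eq_abs, abs_div,
    abs_of_pos (by positivity : (0 : ℝ) < k + 1)]
  gcongr
  exact div_le_self (abs_nonneg r) (by simp)

theorem summable_neg_one_pow_mul_choose {r : ℝ} (hr : 0 ≤ r) :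
    Summable fun k => (-1) ^ k * choose r k := by
  obtain ⟨n, hn⟩ := exists_nat_ge r
  induction n generalizing r with
  | zero => exact summable_neg_one_pow_mul_choose_of_le_one hr (by push_cast at hn; linarith)
  | succ n ih =>
    rcases le_total r 1 with h1 | h1
    · exact summable_neg_one_pow_mul_choose_of_le_one hr h1
    · exact summable_neg_one_pow_mul_choose_of_sub_one
        (ih (by linarith) (by push_cast at hn; linarith))

theorem hasSum_neg_one_pow_mul_choose_mul_pow (r : ℝ) {z : ℝ} (hz : |z| < 1) :
    HasSum (fun k => (-1) ^ k * choose r k * z ^ k) ((1 - z) ^ r) := by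
  have hterm (k : ℕ) : choose r k * (-z) ^ k = (-1) ^ k * choose r k * z ^ k := by
    rw [neg_pow]; ring
  have h := (Real.one_add_rpow_hasFPowerSeriesOnBall_zero (a := r)).hasSum (y := -z)
    (by simpa [enorm_eq_nnnorm, ← NNReal.coe_lt_coe] using hz)
  simp only [binomialSeries, FormalMultilinearSeries.ofScalars, smul_apply,
    ContinuousMultilinearMap.mkPiAlgebraFin_apply, List.ofFn_const, List.prod_replicate,
    smul_eq_mul, hterm, ← sub_eq_add_neg, zero_sub] at h
  exact h

theorem hasSum_neg_one_pow_mul_choose {r : ℝ} (hr : 0 < r) :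
    HasSum (fun k => (-1) ^ k * choose r k) 0 := by
  have hs := summable_neg_one_pow_mul_choose hr.le
  have abel := Real.tendsto_tsum_powerSeries_nhdsWithin_lt hs.hasSum.tendsto_sum_nat
  have hpow : (fun x : ℝ => ∑' k, (-1) ^ k * choose r k * x ^ k) =ᶠ[𝓝[<] 1]
      fun x => (1 - x) ^ r := by
    filter_upwards [Ioo_mem_nhdsLT (show (0 : ℝ) < 1 by norm_num)] with x hx
    exact (hasSum_neg_one_pow_mul_choose_mul_pow r
      (abs_lt.2 ⟨by linarith [hx.1], hx.2⟩)).tsum_eq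
  have hlim : Tendsto (fun x : ℝ => (1 - x) ^ r) (𝓝[<] 1) (𝓝 0) := by
    have := ((continuous_const.sub continuous_id).rpow_const (f := fun x : ℝ => 1 - x)
      fun _ => Or.inr hr.le).tendsto 1
    simpa [Real.zero_rpow hr.ne'] using this.mono_left nhdsWithin_le_nhds
  rw [← tendsto_nhds_unique (abel.congr' hpow) hlim]
  exact hs.hasSum

theorem hasSum_natCast_mul_neg_one_pow_mul_choose {r : ℝ} (hr : 1 < r) :
    HasSum (fun k : ℕ => (k : ℝ) * ((-1) ^ k * choose r k)) 0 := by
  have h := hasSum_neg_one_pow_mul_choose (sub_pos.2 hr)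
  have hshift : (fun k : ℕ => ((k + 1 : ℕ) : ℝ) * ((-1) ^ (k + 1) * choose r (k + 1)))
      = fun k => -r * ((-1) ^ k * choose (r - 1) k) := by
    funext k
    push_cast
    rw [neg_one_pow_succ_mul_choose_succ]
    field_simp
  rw [← hasSum_nat_add_iff' 1, hshift]
  simpa using h.mul_left (-r)

theorem hasSum_neg_one_pow_mul_choose_mul_pow_of_mem_Ioc {r : ℝ} (hr : 0 < r) {z : ℝ}
    (hz : z ∈ Ioc (-1) 1) :
    HasSum (fun k => (-1) ^ k * choose r k * z ^ k) ((1 - z) ^ r) := by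
  rcases hz.2.lt_or_eq with hz1 | rfl
  · exact hasSum_neg_one_pow_mul_choose_mul_pow r (abs_lt.2 ⟨hz.1, hz1⟩)
  · simpa [Real.zero_rpow hr.ne'] using hasSum_neg_one_pow_mul_choose hr

end Ring

theorem nuAlpha_eq (α : ℝ) (k : ℕ) :
    nuAlpha α k = ((if k = 0 then 2 * α - 1 else 0) + (if k = 1 then √3 else 0)
      + (-1) ^ k * Ring.choose (3 / 2 : ℝ) k) / (2 * α - 1 + √3) := by
  have hD : √3 - 1 + 2 * α = 2 * α - 1 + √3 := by ring
  have hscale (x : ℝ) :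
      x / (1 / (12 * √3) * (2 * α - 1 + √3)) = 12 * √3 * x / (2 * α - 1 + √3) := by
    rw [← div_div]; field_simp
  rcases k with _ | _ | k
  · simp [nuAlpha, hD]
  · have h3 : √3 * √3 = 3 := Real.mul_self_sqrt (by norm_num)
    simp only [nuAlpha, qCoeff, hD, hscale, zero_add, one_ne_zero, ↓reduceIte, pow_one,
      Ring.choose_one_right]
    congr 1
    linear_combination (-1 / 2 : ℝ) * h3
  · simp only [nuAlpha, qCoeff, hD, hscale, genBinom_eq_choose, (k + 1).succ_ne_zero,
      show k + 1 + 1 ≠ 1 by omega, ↓reduceIte, zero_add]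
    field_simp
    ring

theorem nuAlpha_nonneg {α : ℝ} (hα : 0 ≤ α) (k : ℕ) : 0 ≤ nuAlpha α k := by
  have h3 : (3 / 2 : ℝ) < √3 := by rw [Real.lt_sqrt] <;> norm_num
  rw [nuAlpha_eq]
  refine div_nonneg ?_ (by linarith)
  rcases k with _ | _ | k
  · simpa using hα
  · simpa using h3.le
  · simpa using Ring.neg_one_pow_mul_choose_nonneg (r := 3 / 2) (by norm_num) (by norm_num)
      (by omega : 2 ≤ k + 2)

theorem hasSum_nuAlpha_mul_pow (α : ℝ) {z : ℝ} (hz : z ∈ Ioc (-1) 1) :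
    HasSum (fun k => nuAlpha α k * z ^ k)
      ((2 * α - 1 + √3 * z + (1 - z) ^ ((3 : ℝ) / 2)) / (2 * α - 1 + √3)) := by
  have hpoly : HasSum (fun k : ℕ => ((if k = 0 then 2 * α - 1 else 0)
      + (if k = 1 then √3 else 0)) * z ^ k) (2 * α - 1 + √3 * z) := by
    convert (hasSum_ite_eq 0 (2 * α - 1)).add (hasSum_ite_eq 1 (√3 * z)) using 2 with k
    rcases k with _ | _ | k <;> simp
  have h := (hpoly.add (Ring.hasSum_neg_one_pow_mul_choose_mul_pow_of_mem_Ioc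
    (r := 3 / 2) (by norm_num) hz)).div_const (2 * α - 1 + √3)
  exact h.congr_fun fun k => by rw [nuAlpha_eq]; ring

theorem hasSum_natCast_mul_nuAlpha (α : ℝ) :
    HasSum (fun k : ℕ => (k : ℝ) * nuAlpha α k) (√3 / (2 * α - 1 + √3)) := by
  have hpoly : HasSum (fun k : ℕ => (k : ℝ) * ((if k = 0 then 2 * α - 1 else 0)
      + (if k = 1 then √3 else 0))) √3 := by
    convert hasSum_ite_eq 1 √3 using 2 with k
    rcases k with _ | _ | k <;> simp
  have h := (hpoly.add (Ring.hasSum_natCast_mul_neg_one_pow_mul_choose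
    (r := 3 / 2) (by norm_num))).div_const (2 * α - 1 + √3)
  rw [add_zero] at h
  exact h.congr_fun fun k => by rw [nuAlpha_eq]; ring

/-- For every `α ∈ (0,1)`, `ν_α` is a probability distribution on `ℕ` with generating
function `F_α(z) = (2α - 1 + √3 z + (1-z)^{3/2})/(2α - 1 + √3)` on `[0,1]` and mean
`(1 + 2(α - 1/2)/√3)⁻¹`; in particular it is critical iff `α = 1/2`. -/
theorem nuAlpha_probability_and_mean (α : ℝ) (hα : α ∈ Set.Ioo (0 : ℝ) 1) :
    (∀ k : ℕ, 0 ≤ nuAlpha α k)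
    ∧ (∑' k : ℕ, nuAlpha α k) = 1
    ∧ (∀ z ∈ Set.Icc (0 : ℝ) 1,
        (∑' k : ℕ, nuAlpha α k * z ^ k)
          = (2 * α - 1 + Real.sqrt 3 * z + (1 - z) ^ ((3 : ℝ) / 2))
              / (2 * α - 1 + Real.sqrt 3))
    ∧ (∑' k : ℕ, (k : ℝ) * nuAlpha α k) = (1 + 2 * (α - 1 / 2) / Real.sqrt 3)⁻¹
    ∧ ((∑' k : ℕ, (k : ℝ) * nuAlpha α k) = 1 ↔ α = 1 / 2) := by
  have hD : 0 < 2 * α - 1 + √3 := by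
    have : (1 : ℝ) < √3 := by rw [Real.lt_sqrt] <;> norm_num
    linarith [hα.1]
  have hgen (z : ℝ) (hz : z ∈ Icc 0 1) := hasSum_nuAlpha_mul_pow α ⟨by linarith [hz.1], hz.2⟩
  have hmean := (hasSum_natCast_mul_nuAlpha α).tsum_eq
  refine ⟨nuAlpha_nonneg hα.1.le, ?_, fun z hz => (hgen z hz).tsum_eq, ?_, ?_⟩
  · have h := (hgen 1 ⟨zero_le_one, le_rfl⟩).tsum_eq
    simp only [one_pow, mul_one, sub_self, Real.zero_rpow (by norm_num : (3 : ℝ) / 2 ≠ 0),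
      add_zero] at h
    rw [h, div_self hD.ne']
  · rw [hmean, ← inv_div]
    congr 1
    field_simp
    ring
  · rw [hmean, div_eq_one_iff_eq hD.ne']
    constructor <;> intro h <;> linarith
end

section
/- Fix an integer k ≥ 1 and a real β > 1. For each i ∈ {1,…,k}, let (a_n^{(i)})_{n≥0} be a sequence of positive real numbers such that a_n^{(i)} ~ C_i·n^{−β} as n → ∞, for some constants C_i > 0. Then lim_{n→∞} n^β · Σ_{n_1+⋯+n_k = n, n_i ≥ 0} ∏_{i=1}^k a_{n_i}^{(i)} = Σ_{i=1}^k C_i · ∏_{j≠i} (Σ_{n=0}^∞ a_n^{(j)}), where each series Σ_{n=0}^∞ a_n^{(j)} converges since β > 1. -/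
/-!
Peel off the first sequence: the `k`-fold sum is the Cauchy product of `a⁽¹⁾` with the
`(k-1)`-fold sum `b`, whose sum is `∏_{j ≥ 2} ∑ a⁽ʲ⁾`. So by induction everything reduces to
two sequences: if `n^β a_n → A` and `n^β b_n → B` then `n^β (a ⋆ b)_n → A ∑ b + B ∑ a`.
For this, split the convolution at `m = n / 2`; on the half where `m` is small,
`n^β a_m b_{n-m} → a_m B` for each fixed `m` while `n - m ≥ n / 2` gives a summable dominating
sequence `2^β sup |n^β b_n| · |a_m|` (summable because `β > 1`), and symmetrically on the other
half.
-/

open Filter Topology Finset Asymptotics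

namespace Finset.Nat

theorem sum_antidiagonalTuple_succ {M : Type*} [AddCommMonoid M] (k n : ℕ)
    (f : (Fin (k + 1) → ℕ) → M) :
    ∑ t ∈ antidiagonalTuple (k + 1) n, f t =
      ∑ p ∈ antidiagonal n, ∑ t ∈ antidiagonalTuple k p.2, f (Fin.cons p.1 t) := by
  rw [sum_sigma']
  refine sum_nbij' (fun t => ⟨(t 0, ∑ i : Fin k, t i.succ), Fin.tail t⟩)
    (fun p => Fin.cons p.1.1 p.2) ?_ ?_ ?_ ?_ ?_
  · intro t ht
    simp only [mem_antidiagonalTuple, Fin.sum_univ_succ] at ht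
    simp [mem_antidiagonalTuple, Fin.tail, ← ht]
  · rintro ⟨⟨x, y⟩, t⟩ hp
    simp only [mem_sigma, HasAntidiagonal.mem_antidiagonal, mem_antidiagonalTuple] at hp
    simp [mem_antidiagonalTuple, Fin.sum_univ_succ, hp.1, hp.2]
  · intro t _
    simp
  · rintro ⟨⟨x, y⟩, t⟩ hp
    simp only [mem_sigma, mem_antidiagonalTuple] at hp
    simp [hp.2]
  · intro t _
    simp

theorem sum_antidiagonalTuple_succ_prod {R : Type*} [CommSemiring R] (k n : ℕ)
    (c : Fin (k + 1) → ℕ → R) :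
    ∑ t ∈ antidiagonalTuple (k + 1) n, ∏ i, c i (t i) =
      ∑ p ∈ antidiagonal n, c 0 p.1 * ∑ t ∈ antidiagonalTuple k p.2, ∏ i, c i.succ (t i) := by
  simp [sum_antidiagonalTuple_succ, Fin.prod_univ_succ, mul_sum]

theorem sum_antidiagonalTuple_zero_prod {R : Type*} [CommSemiring R] (n : ℕ)
    (c : Fin 0 → ℕ → R) :
    ∑ t ∈ antidiagonalTuple 0 n, ∏ i, c i (t i) = if n = 0 then 1 else 0 := by
  cases n <;> simp

theorem sum_antidiagonal_eq_tsum_add_tsum (f : ℕ → ℕ → ℝ) (n : ℕ) :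
    ∑ p ∈ antidiagonal n, f p.1 p.2 =
      (∑' m, if 2 * m ≤ n then f m (n - m) else 0) +
        ∑' m, if 2 * m + 1 ≤ n then f (n - m) m else 0 := by
  have hsupp (P : ℕ → Prop) [DecidablePred P] (hP : ∀ m, P m → m ≤ n) (g : ℕ → ℝ) :
      (∑' m, if P m then g m else 0) = ∑ m ∈ range (n + 1), if P m then g m else 0 :=
    tsum_eq_sum fun m hm => if_neg fun h => hm (mem_range.2 (Nat.lt_succ_of_le (hP m h)))
  rw [hsupp (fun m => 2 * m ≤ n) (fun m h => by omega),
    hsupp (fun m => 2 * m + 1 ≤ n) (fun m h => by omega), Nat.sum_antidiagonal_eq_sum_range_succ f,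
    ← sum_range_reflect (fun m => if 2 * m + 1 ≤ n then f (n - m) m else 0), ← sum_add_distrib]
  refine sum_congr rfl fun m hm => ?_
  rw [mem_range, Nat.lt_succ_iff] at hm
  rw [add_tsub_cancel_right, Nat.sub_sub_self hm]
  split_ifs <;> first | omega | simp

end Finset.Nat

theorem Fin.sum_mul_prod_erase_succ {R : Type*} [CommSemiring R] {k : ℕ}
    (C S : Fin (k + 1) → R) :
    ∑ i, C i * ∏ j ∈ univ.erase i, S j =
      C 0 * ∏ j : Fin k, S j.succ + S 0 * ∑ i : Fin k, C i.succ * ∏ j ∈ univ.erase i, S j.succ := by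
  simp only [← filter_ne', prod_filter, Fin.sum_univ_succ, Fin.prod_univ_succ, ne_eq,
    Fin.succ_ne_zero, Fin.succ_inj, mul_sum, ite_not, if_true, if_false, one_mul,
    (Fin.succ_ne_zero _).symm, mul_left_comm]

open Finset.Nat in
theorem hasSum_sum_antidiagonalTuple_prod {k : ℕ} (c : Fin k → ℕ → ℝ)
    (hc : ∀ i, Summable (c i)) :
    HasSum (fun n => ∑ t ∈ antidiagonalTuple k n, ∏ i, c i (t i)) (∏ i, ∑' n, c i n) := by
  induction k with
  | zero =>
    simp_rw [sum_antidiagonalTuple_zero_prod, univ_eq_empty, prod_empty]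
    exact hasSum_ite_eq 0 1
  | succ k ih =>
    have hd := ih (fun i => c i.succ) (fun i => hc i.succ)
    simp_rw [sum_antidiagonalTuple_succ_prod]
    have hc0 := (hc 0).norm
    have hd' := hd.summable.norm
    rw [Fin.prod_univ_succ, ← hd.tsum_eq,
      tsum_mul_tsum_eq_tsum_sum_antidiagonal_of_summable_norm hc0 hd']
    exact (summable_norm_sum_mul_antidiagonal_of_summable_norm hc0 hd').of_norm.hasSum

section RpowDecay

variable {β A B : ℝ} {a b : ℕ → ℝ}

theorem tendsto_rpow_mul_of_tendsto_div_rpow_neg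
    (h : Tendsto (fun n : ℕ => a n / (A * (n : ℝ) ^ (-β))) atTop (𝓝 1)) :
    Tendsto (fun n : ℕ => (n : ℝ) ^ β * a n) atTop (𝓝 A) := by
  have hequiv : (fun n : ℕ => (n : ℝ) ^ β * a n) ~[atTop]
      fun n => (n : ℝ) ^ β * (A * (n : ℝ) ^ (-β)) :=
    IsEquivalent.refl.mul (isEquivalent_of_tendsto_one h)
  refine hequiv.symm.tendsto_nhds (tendsto_const_nhds.congr' ?_)
  filter_upwards [eventually_gt_atTop 0] with n hn
  rw [Real.rpow_neg (Nat.cast_nonneg n)]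
  field_simp

theorem summable_of_tendsto_rpow_mul (hβ : 1 < β)
    (ha : Tendsto (fun n : ℕ => (n : ℝ) ^ β * a n) atTop (𝓝 A)) : Summable a := by
  have hbigO : a =O[atTop] fun n : ℕ => (n : ℝ) ^ (-β) := by
    have := (isBigO_refl (fun n : ℕ => (n : ℝ) ^ (-β)) atTop).mul (ha.isBigO_one ℝ)
    refine (this.congr' ?_ (by simp)).trans (isBigO_refl _ _)
    filter_upwards [eventually_gt_atTop 0] with n hn
    rw [← mul_assoc, ← Real.rpow_add (by positivity), neg_add_cancel, Real.rpow_zero, one_mul]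
  exact summable_of_isBigO_nat (Real.summable_nat_rpow.2 (by linarith)) hbigO

theorem tendsto_rpow_mul_comp_sub
    (hb : Tendsto (fun n : ℕ => (n : ℝ) ^ β * b n) atTop (𝓝 B)) (m : ℕ) :
    Tendsto (fun n : ℕ => (n : ℝ) ^ β * b (n - m)) atTop (𝓝 B) := by
  have hratio : Tendsto (fun n : ℕ => (((n - m : ℕ) : ℝ) / n) ^ β) atTop (𝓝 1) := by
    have h := (tendsto_natCast_div_add_atTop (m : ℝ)).comp (tendsto_sub_atTop_nat m)
    have h' := ((Real.continuousAt_rpow_const 1 β (Or.inl one_ne_zero)).tendsto.comp h)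
    rw [Real.one_rpow] at h'
    refine h'.congr' ?_
    filter_upwards [eventually_ge_atTop m] with n hn
    simp [Nat.cast_sub hn]
  have := (hb.comp (tendsto_sub_atTop_nat m)).div hratio one_ne_zero
  rw [div_one] at this
  refine this.congr' ?_
  filter_upwards [eventually_gt_atTop m] with n hn
  have hnm : (0 : ℝ) < ((n - m : ℕ) : ℝ) := by exact_mod_cast Nat.sub_pos_of_lt hn
  have hn0 : (0 : ℝ) < n := by exact_mod_cast (Nat.zero_le m).trans_lt hn
  simp only [Pi.div_apply, Function.comp_apply, Real.div_rpow hnm.le hn0.le]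
  field_simp

theorem rpow_le_two_rpow_mul_rpow_sub (hβ : 0 ≤ β) {m n : ℕ} (h : 2 * m ≤ n) :
    (n : ℝ) ^ β ≤ 2 ^ β * ((n - m : ℕ) : ℝ) ^ β := by
  rw [← Real.mul_rpow zero_le_two (Nat.cast_nonneg _)]
  exact Real.rpow_le_rpow (Nat.cast_nonneg n) (by norm_cast; omega) hβ

/-- Restricting to `2 * m + c ≤ n` keeps `n - m ≥ n / 2`, so the terms are dominated by
`2 ^ β * (sup_n |n ^ β * b n|) * |a m|` and dominated convergence for series applies. -/
theorem tendsto_rpow_mul_conv_lowerHalf (hβ : 0 ≤ β) (c : ℕ) (ha : Summable a)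
    (hb : Tendsto (fun n : ℕ => (n : ℝ) ^ β * b n) atTop (𝓝 B)) :
    Tendsto (fun n : ℕ => ∑' m, if 2 * m + c ≤ n then (n : ℝ) ^ β * (a m * b (n - m)) else 0)
      atTop (𝓝 ((∑' m, a m) * B)) := by
  obtain ⟨K, hK⟩ := hb.norm.bddAbove_range
  have hbK (n : ℕ) : ‖(n : ℝ) ^ β * b n‖ ≤ K := hK (Set.mem_range_self n)
  rw [← tsum_mul_right]
  refine tendsto_tsum_of_dominated_convergence (bound := fun m => 2 ^ β * K * ‖a m‖)
    (ha.norm.mul_left _) (fun m => ?_) (Eventually.of_forall fun n m => ?_)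
  · refine ((tendsto_rpow_mul_comp_sub hb m).const_mul (a m)).congr' ?_
    filter_upwards [eventually_ge_atTop (2 * m + c)] with n hn
    rw [if_pos hn, mul_left_comm]
  · split_ifs with hmn
    · calc ‖(n : ℝ) ^ β * (a m * b (n - m))‖
          = ‖a m‖ * ((n : ℝ) ^ β * ‖b (n - m)‖) := by
            rw [norm_mul, norm_mul, Real.norm_of_nonneg (by positivity)]; ring
        _ ≤ ‖a m‖ * (2 ^ β * ((n - m : ℕ) : ℝ) ^ β * ‖b (n - m)‖) := by
            gcongr
            exact rpow_le_two_rpow_mul_rpow_sub hβ (show 2 * m ≤ n by omega)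
        _ ≤ ‖a m‖ * (2 ^ β * K) := by
            rw [mul_assoc]
            gcongr
            simpa [Real.norm_of_nonneg (Real.rpow_nonneg (Nat.cast_nonneg _) β)] using hbK (n - m)
        _ = 2 ^ β * K * ‖a m‖ := by ring
    · rw [norm_zero]
      have := (norm_nonneg _).trans (hbK 0)
      positivity

theorem tendsto_rpow_mul_sum_antidiagonal (hβ : 1 < β)
    (ha : Tendsto (fun n : ℕ => (n : ℝ) ^ β * a n) atTop (𝓝 A))
    (hb : Tendsto (fun n : ℕ => (n : ℝ) ^ β * b n) atTop (𝓝 B)) :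
    Tendsto (fun n : ℕ => (n : ℝ) ^ β * ∑ p ∈ antidiagonal n, a p.1 * b p.2) atTop
      (𝓝 (A * ∑' m, b m + (∑' m, a m) * B)) := by
  have hβ0 : 0 ≤ β := by linarith
  have hlow := tendsto_rpow_mul_conv_lowerHalf hβ0 0 (summable_of_tendsto_rpow_mul hβ ha) hb
  have hhigh := tendsto_rpow_mul_conv_lowerHalf hβ0 1 (summable_of_tendsto_rpow_mul hβ hb) ha
  rw [mul_comm A]
  refine (hhigh.add hlow).congr fun n => ?_
  rw [mul_sum, Nat.sum_antidiagonal_eq_tsum_add_tsum (fun p q => (n : ℝ) ^ β * (a p * b q)),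
    add_comm]
  congr 1
  simp_rw [mul_comm (b _)]

end RpowDecay

open Finset.Nat in
theorem tendsto_rpow_mul_sum_antidiagonalTuple_prod {β : ℝ} (hβ : 1 < β) {k : ℕ}
    (a : Fin k → ℕ → ℝ) (C : Fin k → ℝ)
    (ha : ∀ i, Tendsto (fun n : ℕ => (n : ℝ) ^ β * a i n) atTop (𝓝 (C i))) :
    Tendsto (fun n : ℕ => (n : ℝ) ^ β * ∑ t ∈ antidiagonalTuple k n, ∏ i, a i (t i)) atTop
      (𝓝 (∑ i, C i * ∏ j ∈ univ.erase i, ∑' n, a j n)) := by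
  induction k with
  | zero =>
    simp_rw [sum_antidiagonalTuple_zero_prod, univ_eq_empty, sum_empty]
    refine tendsto_const_nhds.congr' ?_
    filter_upwards [eventually_ne_atTop 0] with n hn
    simp [hn]
  | succ k ih =>
    have htail := ih (fun i => a i.succ) (fun i => C i.succ) (fun i => ha i.succ)
    have htail_sum := hasSum_sum_antidiagonalTuple_prod (fun i => a i.succ)
      (fun i => summable_of_tendsto_rpow_mul hβ (ha i.succ))
    simp_rw [sum_antidiagonalTuple_succ_prod]
    rw [Fin.sum_mul_prod_erase_succ, ← htail_sum.tsum_eq]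
    exact tendsto_rpow_mul_sum_antidiagonal hβ (ha 0) htail

theorem sum_over_compositions_asymptotics_general (k : ℕ) (β : ℝ) (hβ : 1 < β)
    (a : Fin k → ℕ → ℝ) (C : Fin k → ℝ)
    (ha : ∀ i, Filter.Tendsto (fun n : ℕ => a i n / (C i * (n : ℝ) ^ (-β))) atTop
      (nhds 1)) :
    Filter.Tendsto
      (fun n : ℕ =>
        (n : ℝ) ^ β *
          ∑ t ∈ Finset.Nat.antidiagonalTuple k n, ∏ i : Fin k, a i (t i))
      atTop
      (nhds (∑ i : Fin k, C i * ∏ j ∈ Finset.univ.erase i, ∑' n : ℕ, a j n)) :=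
  tendsto_rpow_mul_sum_antidiagonalTuple_prod hβ a C fun i =>
    tendsto_rpow_mul_of_tendsto_div_rpow_neg (ha i)

/-- Lemma 3.5: if for each `i ∈ {1,…,k}` the positive sequence `a^{(i)}` satisfies
`a_n^{(i)} ~ C_i n^{-β}` with `β > 1`, then
`n^β Σ_{n₁+⋯+n_k = n} Π_i a_{n_i}^{(i)} → Σ_i C_i Π_{j ≠ i} Σ_{n≥0} a_n^{(j)}`. -/
theorem sum_over_compositions_asymptotics (k : ℕ) (hk : 1 ≤ k) (β : ℝ) (hβ : 1 < β)
    (a : Fin k → ℕ → ℝ) (C : Fin k → ℝ)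
    (ha_pos : ∀ i n, 0 < a i n) (hC_pos : ∀ i, 0 < C i)
    (ha : ∀ i, Filter.Tendsto (fun n : ℕ => a i n / (C i * (n : ℝ) ^ (-β))) atTop
      (nhds 1)) :
    Filter.Tendsto
      (fun n : ℕ =>
        (n : ℝ) ^ β *
          ∑ t ∈ Finset.Nat.antidiagonalTuple k n, ∏ i : Fin k, a i (t i))
      atTop
      (nhds (∑ i : Fin k, C i * ∏ j ∈ Finset.univ.erase i, ∑' n : ℕ, a j n)) :=
  sum_over_compositions_asymptotics_general k β hβ a C ha
end

section
/- Fix α ∈ (1,2). (a) There exists ε > 0 such that for all η, t ∈ [0, ε] with (η, t) ≠ (0,0), Re((−η + i·t)^α) ≤ η^α − |cos(απ/2)|·t^α, where the complex power is the principal branch. (b) For all η, t ≥ 0 with (η,t) ≠ (0,0), |−η + i·t|^α ≤ 2·(η^α + t^α). -/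
/-!
Write `z = -η + i t = r e^{iθ}` with `θ ∈ [π/2, π]`, so that `Re z^α = r^α cos(αθ)`,
`η = -r cos θ` and `t = r sin θ`; part (a) becomes an inequality between trigonometric functions
of `θ`. With `θ = ψ + π/2` and `c = cos(απ/2) ∈ [-1, 0]` it reduces, since
`cos(αθ) ≤ c cos(αψ)`, to `cos ψ ^ α ≤ cos(αψ) + sin ψ ^ α`. That follows from the addition formula
`cos(αψ) = cos ψ cos((α-1)ψ) - sin ψ sin((α-1)ψ)` together with `cos ψ ^ β ≤ cos(βψ)`
(Bernoulli and concavity of `cos`) and `sin(βψ) ≤ sin ψ ^ β` for `β = α - 1 ∈ [0, 1]`.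
Part (b) is `‖z‖ ≤ η + t` and `(η + t)^α ≤ 2^(α-1) (η^α + t^α)`.
-/

open Real Set Complex

namespace Real

lemma rpow_cos_le_cos_mul {β ψ : ℝ} (hβ0 : 0 ≤ β) (hβ1 : β ≤ 1)
    (hψ : ψ ∈ Icc (-(π / 2)) (π / 2)) : cos ψ ^ β ≤ cos (β * ψ) := by
  have bernoulli : cos ψ ^ β ≤ β * cos ψ + (1 - β) := by
    have h := rpow_one_add_le_one_add_mul_self
      (by linarith [cos_nonneg_of_mem_Icc hψ] : -1 ≤ cos ψ - 1) hβ0 hβ1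
    rw [add_sub_cancel] at h
    linarith
  have concave : β * cos ψ + (1 - β) ≤ cos (β * ψ) := by
    have h0 : (0 : ℝ) ∈ Icc (-(π / 2)) (π / 2) := ⟨by linarith [pi_pos], by linarith [pi_pos]⟩
    have h := strictConcaveOn_cos_Icc.concaveOn.2 hψ h0 hβ0 (by linarith : 0 ≤ 1 - β) (by ring)
    simpa only [smul_eq_mul, mul_zero, add_zero, cos_zero, mul_one] using h
  exact bernoulli.trans concave

lemma sin_mul_le_rpow_sin {β ψ : ℝ} (hβ0 : 0 ≤ β) (hβ1 : β ≤ 1) (hψ0 : 0 ≤ ψ)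
    (hψ : ψ ≤ π / 2) : sin (β * ψ) ≤ sin ψ ^ β := calc
  sin (β * ψ) ≤ sin ψ := strictMonoOn_sin.monotoneOn
    ⟨by nlinarith [pi_pos], by nlinarith⟩ ⟨by linarith [pi_pos], hψ⟩ (by nlinarith)
  _ ≤ sin ψ ^ β :=
    self_le_rpow_of_le_one (sin_nonneg_of_nonneg_of_le_pi hψ0 (by linarith)) (sin_le_one ψ) hβ1

lemma rpow_cos_le_cos_mul_add_rpow_sin {p ψ : ℝ} (hp1 : 1 ≤ p) (hp2 : p ≤ 2) (hψ0 : 0 ≤ ψ)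
    (hψ : ψ ≤ π / 2) : cos ψ ^ p ≤ cos (p * ψ) + sin ψ ^ p := by
  have hcos : 0 ≤ cos ψ := cos_nonneg_of_mem_Icc ⟨by linarith [pi_pos], hψ⟩
  have hsin : 0 ≤ sin ψ := sin_nonneg_of_nonneg_of_le_pi hψ0 (by linarith [pi_pos])
  obtain ⟨β, rfl⟩ : ∃ β, p = 1 + β := ⟨p - 1, by ring⟩
  have hne : 1 + β ≠ 0 := by linarith
  have hcos_le : cos ψ ^ (1 + β) ≤ cos ψ * cos (β * ψ) := by
    rw [rpow_one_add' hcos hne]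
    exact mul_le_mul_of_nonneg_left
      (rpow_cos_le_cos_mul (by linarith) (by linarith) ⟨by linarith [pi_pos], hψ⟩) hcos
  have hsin_le : sin ψ * sin (β * ψ) ≤ sin ψ ^ (1 + β) := by
    rw [rpow_one_add' hsin hne]
    exact mul_le_mul_of_nonneg_left (sin_mul_le_rpow_sin (by linarith) (by linarith) hψ0 hψ) hsin
  have addition : cos ((1 + β) * ψ) = cos ψ * cos (β * ψ) - sin ψ * sin (β * ψ) := by
    rw [add_mul, one_mul, cos_add]
  linarith

lemma cos_mul_le_rpow_neg_cos_sub_rpow_sin {α θ : ℝ} (hα1 : 1 ≤ α) (hα2 : α ≤ 2)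
    (hθ1 : π / 2 ≤ θ) (hθ2 : θ ≤ π) :
    cos (θ * α) ≤ (-cos θ) ^ α - |cos (α * π / 2)| * sin θ ^ α := by
  obtain ⟨ψ, rfl⟩ : ∃ ψ, θ = ψ + π / 2 := ⟨θ - π / 2, by ring⟩
  have hψ0 : 0 ≤ ψ := by linarith
  have hψ : ψ ≤ π / 2 := by linarith
  set c := cos (α * π / 2)
  have hc0 : c ≤ 0 := cos_nonpos_of_pi_div_two_le_of_le (by nlinarith [pi_pos]) (by nlinarith)
  have hc1 : -1 ≤ c := neg_one_le_cos _
  have hcos_le : cos ((ψ + π / 2) * α) ≤ cos (α * ψ) * c := by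
    have hsin₁ : 0 ≤ sin (α * ψ) := sin_nonneg_of_nonneg_of_le_pi (by positivity) (by nlinarith)
    have hsin₂ : 0 ≤ sin (α * π / 2) :=
      sin_nonneg_of_nonneg_of_le_pi (by nlinarith [pi_pos]) (by nlinarith [pi_pos])
    rw [show (ψ + π / 2) * α = α * ψ + α * π / 2 by ring, cos_add]
    nlinarith [mul_nonneg hsin₁ hsin₂]
  have key := rpow_cos_le_cos_mul_add_rpow_sin hα1 hα2 hψ0 hψ
  have hsin_rpow : 0 ≤ sin ψ ^ α :=
    rpow_nonneg (sin_nonneg_of_nonneg_of_le_pi hψ0 (by linarith)) _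
  rw [cos_add_pi_div_two, neg_neg, sin_add_pi_div_two, abs_of_nonpos hc0]
  -- `c * (cos (α ψ) - cos ψ ^ α) ≤ -c * sin ψ ^ α ≤ sin ψ ^ α`, as `c ∈ [-1, 0]`
  nlinarith [mul_nonneg (neg_nonneg.2 hc0) (by linarith : 0 ≤ cos (α * ψ) - cos ψ ^ α + sin ψ ^ α),
    mul_nonneg (by linarith : 0 ≤ 1 + c) hsin_rpow]

lemma rpow_add_le_mul_rpow_add_rpow {a b p : ℝ} (ha : 0 ≤ a) (hb : 0 ≤ b) (hp : 1 ≤ p) :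
    (a + b) ^ p ≤ 2 ^ (p - 1) * (a ^ p + b ^ p) := by
  exact_mod_cast NNReal.rpow_add_le_mul_rpow_add_rpow ⟨a, ha⟩ ⟨b, hb⟩ hp

end Real

namespace Complex

lemma re_cpow_ofReal_le {z : ℂ} {α : ℝ} (hα1 : 1 ≤ α) (hα2 : α ≤ 2) (hre : z.re ≤ 0)
    (him : 0 ≤ z.im) (hz : z ≠ 0) :
    (z ^ (α : ℂ)).re ≤ (-z.re) ^ α - |Real.cos (α * π / 2)| * z.im ^ α := by
  have harg : π / 2 ≤ arg z := by
    rw [← not_lt, arg_lt_pi_div_two_iff]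
    push Not
    exact ⟨hre, him, hz⟩
  have hθ := Real.cos_mul_le_rpow_neg_cos_sub_rpow_sin hα1 hα2 harg (arg_le_pi z)
  have hcos : 0 ≤ -Real.cos (arg z) := by
    rw [cos_arg hz, neg_nonneg]
    exact div_nonpos_of_nonpos_of_nonneg hre (norm_nonneg z)
  have hsin : 0 ≤ Real.sin (arg z) := Real.sin_nonneg_of_nonneg_of_le_pi (arg_nonneg_iff.2 him)
    (arg_le_pi z)
  rw [cpow_ofReal_re, ← norm_mul_cos_arg, ← norm_mul_sin_arg, ← mul_neg,
    Real.mul_rpow (norm_nonneg z) hcos, Real.mul_rpow (norm_nonneg z) hsin]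
  have hr : 0 ≤ ‖z‖ ^ α := Real.rpow_nonneg (norm_nonneg z) α
  nlinarith [mul_le_mul_of_nonneg_left hθ hr]

lemma norm_rpow_le_two_mul {z : ℂ} {p : ℝ} (hp1 : 1 ≤ p) (hp2 : p ≤ 2) :
    ‖z‖ ^ p ≤ 2 * (|z.re| ^ p + |z.im| ^ p) := calc
  ‖z‖ ^ p ≤ (|z.re| + |z.im|) ^ p :=
    Real.rpow_le_rpow (norm_nonneg z) (norm_le_abs_re_add_abs_im z) (by linarith)
  _ ≤ 2 ^ (p - 1) * (|z.re| ^ p + |z.im| ^ p) :=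
    Real.rpow_add_le_mul_rpow_add_rpow (abs_nonneg _) (abs_nonneg _) hp1
  _ ≤ 2 * (|z.re| ^ p + |z.im| ^ p) := by
    gcongr
    simpa using Real.rpow_le_rpow_of_exponent_le one_le_two (by linarith : p - 1 ≤ 1)

end Complex

/-- (a) For `α ∈ (1,2)`, there is `ε > 0` such that for `η, t ∈ [0, ε]` not both zero,
`Re((-η + it)^α) ≤ η^α - |cos(απ/2)| t^α` (principal branch of the complex power);
(b) for all `η, t ≥ 0` not both zero, `|-η + it|^α ≤ 2(η^α + t^α)`. -/
theorem cpow_estimates (α : ℝ) (hα : α ∈ Set.Ioo (1 : ℝ) 2) :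
    (∃ ε > (0 : ℝ), ∀ η t : ℝ, η ∈ Set.Icc (0 : ℝ) ε → t ∈ Set.Icc (0 : ℝ) ε →
      (η, t) ≠ (0, 0) →
      ((-(η : ℂ) + (t : ℂ) * Complex.I) ^ (α : ℂ)).re
        ≤ η ^ α - |Real.cos (α * Real.pi / 2)| * t ^ α)
    ∧ (∀ η t : ℝ, 0 ≤ η → 0 ≤ t → (η, t) ≠ (0, 0) →
        ‖-(η : ℂ) + (t : ℂ) * Complex.I‖ ^ α
          ≤ 2 * (η ^ α + t ^ α)) := by
  obtain ⟨hα1, hα2⟩ := hα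
  refine ⟨⟨1, one_pos, fun η t ⟨hη, _⟩ ⟨ht, _⟩ hne => ?_⟩, fun η t hη ht _ => ?_⟩
  · have hz : -(η : ℂ) + t * I ≠ 0 := by
      contrapose! hne
      simpa [Complex.ext_iff] using hne
    simpa using re_cpow_ofReal_le hα1.le hα2.le (by simpa using hη) (by simpa using ht) hz
  · simpa [abs_of_nonneg hη, abs_of_nonneg ht] using
      norm_rpow_le_two_mul (z := -(η : ℂ) + t * I) hα1.le hα2.le
end
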